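/- Fix real numbers t₀ and N with 2 < t₀ < 3 ≤ N, let t₀ ≤ t < N, and set r(t) = (1 − q(t)^{−2})/(1 − q(N)^{−2}) and C_{t₀} = (1 − q(t₀)^{−2})^{−1}, where q(s) = (s + √(s² − 4))/2. Then for every n ≥ 1 and all positive integers k₁, …, k_n: r(t)^{n−1} · ∏_{s=1}^{n} u_{k_s}(t)/u_{k_s}(N) ≤ C_{t₀} · (t/N)^{k₁ + ⋯ + k_n}. -/

import Mathlib

/-- The dilated Chebyshev polynomials of the second kind:
`u 0 x = 1`, `u 1 x = x`, `x * u n x = u (n+1) x + u (n-1) x`. -/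
noncomputable def chebU : ℕ → ℝ → ℝ
  | 0 => fun _ => 1
  | 1 => fun x => x
  | n + 2 => fun x => x * chebU (n + 1) x - chebU n x

/-- `qf s = (s + √(s² − 4)) / 2`. -/
noncomputable def qf (s : ℝ) : ℝ := (s + Real.sqrt (s ^ 2 - 4)) / 2

lemma qf_gt_one {s : ℝ} (hs : 2 < s) : 1 < qf s := by
  have h : 0 ≤ Real.sqrt (s ^ 2 - 4) := Real.sqrt_nonneg _
  unfold qf; linarith

lemma qf_inv {s : ℝ} (hs : 2 < s) : (qf s)⁻¹ = (s - Real.sqrt (s ^ 2 - 4)) / 2 := by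
  have hd : 0 ≤ s ^ 2 - 4 := by nlinarith
  have hsq : Real.sqrt (s ^ 2 - 4) ^ 2 = s ^ 2 - 4 := Real.sq_sqrt hd
  have h1 : qf s * ((s - Real.sqrt (s ^ 2 - 4)) / 2) = 1 := by
    unfold qf; nlinarith [hsq]
  exact inv_eq_of_mul_eq_one_right h1

lemma qf_add_inv {s : ℝ} (hs : 2 < s) : qf s + (qf s)⁻¹ = s := by
  rw [qf_inv hs]; unfold qf; ring

lemma qf_mono {s₁ s₂ : ℝ} (h2 : 2 ≤ s₁) (h : s₁ ≤ s₂) : qf s₁ ≤ qf s₂ := by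
  unfold qf
  have h4 : s₁ ^ 2 - 4 ≤ s₂ ^ 2 - 4 := by nlinarith
  have := Real.sqrt_le_sqrt h4
  gcongr

lemma cheb_closed (q : ℝ) (hq : q ≠ 0) (k : ℕ) :
    chebU k (q + q⁻¹) * (q - q⁻¹) = q ^ (k + 1) - q⁻¹ ^ (k + 1) := by
  have hqr : q * q⁻¹ = 1 := mul_inv_cancel₀ hq
  induction k using Nat.strong_induction_on with
  | _ k ih =>
    match k with
    | 0 => simp [chebU]
    | 1 => show (q + q⁻¹) * (q - q⁻¹) = _; ring
    | (m + 2) =>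
      have h0 := ih m (by omega)
      have h1 := ih (m + 1) (by omega)
      show ((q + q⁻¹) * chebU (m + 1) (q + q⁻¹) - chebU m (q + q⁻¹)) * (q - q⁻¹) = _
      linear_combination (q + q⁻¹) * h1 - h0 + (q ^ (m + 1) - q⁻¹ ^ (m + 1)) * hqr

lemma cheb_form (q : ℝ) (hq0 : q ≠ 0) (k : ℕ) :
    chebU k (q + q⁻¹) * (1 - q⁻¹ ^ 2) = q ^ k * (1 - q⁻¹ ^ (2 * (k + 1))) := by
  have hqr : q * q⁻¹ = 1 := mul_inv_cancel₀ hq0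
  have h := cheb_closed q hq0 k
  have h2 : q ^ k * q⁻¹ ^ (k + 1) = q⁻¹ := by
    rw [pow_succ, ← mul_assoc, ← mul_pow, hqr, one_pow, one_mul]
  have h3 : (1 : ℝ) - q⁻¹ ^ 2 = (q - q⁻¹) * q⁻¹ := by
    rw [sub_mul, hqr]; ring
  have h4 : q ^ (k + 1) * q⁻¹ = q ^ k := by rw [pow_succ, mul_assoc, hqr, mul_one]
  have h5 : q ^ k * q⁻¹ ^ (2 * (k + 1)) = q⁻¹ ^ (k + 1) * q⁻¹ := by
    rw [two_mul, pow_add, ← mul_assoc, h2, mul_comm]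
  rw [h3, ← mul_assoc, h, sub_mul, h4, mul_sub, mul_one, h5]

lemma cheb_form' {s : ℝ} (hs : 2 < s) (k : ℕ) :
    chebU k s * (1 - (qf s)⁻¹ ^ 2) = qf s ^ k * (1 - (qf s)⁻¹ ^ (2 * (k + 1))) := by
  have h := cheb_form (qf s) (by have := qf_gt_one hs; intro h0; rw [h0] at this; linarith) k
  rwa [qf_add_inv hs] at h

lemma inv_lt_one_my {q : ℝ} (hq : 1 < q) : q⁻¹ < 1 := by
  have h0 : 0 < q := by linarith
  have h1 : 0 < q⁻¹ := inv_pos.mpr h0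
  have h2 : q * q⁻¹ = 1 := mul_inv_cancel₀ (ne_of_gt h0)
  nlinarith

lemma cheb_pos {s : ℝ} (hs : 2 < s) (k : ℕ) : 0 < chebU k s := by
  have hq := qf_gt_one hs
  have hr1 : (qf s)⁻¹ < 1 := inv_lt_one_my hq
  have hr0 : 0 < (qf s)⁻¹ := inv_pos.mpr (by linarith)
  have h := cheb_form' hs k
  have h1 : 0 < 1 - (qf s)⁻¹ ^ 2 := by nlinarith
  have h2 : (qf s)⁻¹ ^ (2 * (k + 1)) < 1 := pow_lt_one₀ hr0.le hr1 (by omega)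
  have h3 : 0 < qf s ^ k * (1 - (qf s)⁻¹ ^ (2 * (k + 1))) := by
    apply mul_pos (pow_pos (by linarith) k); linarith
  nlinarith

lemma factor_le {t N : ℝ} (h2 : 2 < t) (htN : t ≤ N) (k : ℕ) :
    chebU k t / chebU k N ≤
      (1 - (qf N)⁻¹ ^ 2) / (1 - (qf t)⁻¹ ^ 2) * (t / N) ^ k := by
  have h2N : 2 < N := lt_of_lt_of_le h2 htN
  set A := qf t with hAdef
  set B := qf N with hBdef
  have hA : 1 < A := qf_gt_one h2
  have hB : 1 < B := qf_gt_one h2N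
  have hAB : A ≤ B := qf_mono (le_of_lt h2) htN
  have hA0 : (0:ℝ) < A := by linarith
  have hB0 : (0:ℝ) < B := by linarith
  have ha0 : 0 < A⁻¹ := inv_pos.mpr hA0
  have hb0 : 0 < B⁻¹ := inv_pos.mpr hB0
  have ha1 : A⁻¹ < 1 := inv_lt_one_my hA
  have hb1 : B⁻¹ < 1 := inv_lt_one_my hB
  have hba : B⁻¹ ≤ A⁻¹ := by
    have := mul_inv_cancel₀ (ne_of_gt hA0)
    have := mul_inv_cancel₀ (ne_of_gt hB0)
    nlinarith
  have hPa := cheb_form' h2 k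
  have hQb := cheb_form' h2N k
  have hP := cheb_pos h2 k
  have hQ := cheb_pos h2N k
  have hda : 0 < 1 - A⁻¹ ^ 2 := by nlinarith
  have hdb : 0 < 1 - B⁻¹ ^ 2 := by nlinarith
  have ht0 : 0 < t := by linarith
  have hN0 : 0 < N := by linarith
  -- A * N ≤ B * t
  have hANBt : A * N ≤ B * t := by
    have e1 : A * A⁻¹ = 1 := mul_inv_cancel₀ (ne_of_gt hA0)
    have e2 : B * B⁻¹ = 1 := mul_inv_cancel₀ (ne_of_gt hB0)
    have ht' : t = A + A⁻¹ := (qf_add_inv h2).symm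
    have hN' : N = B + B⁻¹ := (qf_add_inv h2N).symm
    rw [ht', hN']
    have h5 : B * A⁻¹ - A * B⁻¹ = (B - A) * (B + A) * A⁻¹ * B⁻¹ := by
      field_simp
      ring
    have h6 : 0 ≤ (B - A) * (B + A) * A⁻¹ * B⁻¹ := by
      apply mul_nonneg (mul_nonneg (mul_nonneg (by linarith) (by linarith)) ha0.le) hb0.le
    linarith
  rw [div_pow, div_mul_div_comm, div_le_div_iff₀ hQ (by positivity)]
  calc chebU k t * ((1 - A⁻¹ ^ 2) * N ^ k)
      = chebU k t * (1 - A⁻¹ ^ 2) * N ^ k := by ring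
    _ = A ^ k * (1 - A⁻¹ ^ (2 * (k + 1))) * N ^ k := by rw [hPa]
    _ = (A * N) ^ k * (1 - A⁻¹ ^ (2 * (k + 1))) := by rw [mul_pow]; ring
    _ ≤ (B * t) ^ k * (1 - B⁻¹ ^ (2 * (k + 1))) := by
        apply mul_le_mul (pow_le_pow_left₀ (by positivity) hANBt k)
        · have := pow_le_pow_left₀ hb0.le hba (2 * (k + 1)); linarith
        · have : A⁻¹ ^ (2 * (k + 1)) ≤ 1 := pow_le_one₀ ha0.le ha1.le; linarith
        · positivity
    _ = B ^ k * (1 - B⁻¹ ^ (2 * (k + 1))) * t ^ k := by rw [mul_pow]; ring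
    _ = chebU k N * (1 - B⁻¹ ^ 2) * t ^ k := by rw [hQb]
    _ = (1 - B⁻¹ ^ 2) * t ^ k * chebU k N := by ring


set_option maxHeartbeats 1000000 in
theorem stmt_5 (t₀ N : ℝ) (ht₀ : 2 < t₀) (ht₀3 : t₀ < 3) (hN : 3 ≤ N)
    (t : ℝ) (ht : t₀ ≤ t) (htN : t < N) (n : ℕ) (hn : 1 ≤ n)
    (k : Fin n → ℕ) (hk : ∀ i, 1 ≤ k i) :
    ((1 - qf t ^ (-2 : ℤ)) / (1 - qf N ^ (-2 : ℤ))) ^ (n - 1) *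
        ∏ i, chebU (k i) t / chebU (k i) N ≤
      (1 - qf t₀ ^ (-2 : ℤ))⁻¹ * (t / N) ^ (∑ i, k i) := by
  obtain ⟨m, rfl⟩ : ∃ m, n = m + 1 := ⟨n - 1, by omega⟩
  have hz : ∀ x : ℝ, x ^ (-2 : ℤ) = x⁻¹ ^ 2 := by
    intro x
    rw [zpow_neg, zpow_two, mul_inv]
    ring
  simp only [hz, Nat.add_sub_cancel]
  have h2t : 2 < t := lt_of_lt_of_le ht₀ ht
  have h2N : 2 < N := by linarith
  have hA0 : 1 < qf t₀ := qf_gt_one ht₀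
  have hA : 1 < qf t := qf_gt_one h2t
  have hB : 1 < qf N := qf_gt_one h2N
  have hA0A : qf t₀ ≤ qf t := qf_mono ht₀.le ht
  set a0 := (qf t₀)⁻¹ with ha0def
  set a := (qf t)⁻¹ with hadef
  set b := (qf N)⁻¹ with hbdef
  have ha01 : a0 < 1 := inv_lt_one_my hA0
  have ha1 : a < 1 := inv_lt_one_my hA
  have hb1 : b < 1 := inv_lt_one_my hB
  have ha00 : 0 < a0 := inv_pos.mpr (by linarith)
  have ha0 : 0 < a := inv_pos.mpr (by linarith)
  have hb0 : 0 < b := inv_pos.mpr (by linarith)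
  have haa0 : a ≤ a0 := by
    have := mul_inv_cancel₀ (show qf t₀ ≠ 0 by intro h; rw [h] at hA0; linarith)
    have := mul_inv_cancel₀ (show qf t ≠ 0 by intro h; rw [h] at hA; linarith)
    nlinarith
  have hda0 : 0 < 1 - a0 ^ 2 := by nlinarith
  have hda : 0 < 1 - a ^ 2 := by nlinarith
  have hdb : 0 < 1 - b ^ 2 := by nlinarith
  clear_value a0 a b
  set r : ℝ := (1 - a ^ 2) / (1 - b ^ 2) with hrdef
  have hr0 : 0 < r := div_pos hda hdb
  have htN0 : 0 < t / N := div_pos (by linarith) (by linarith)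
  have key : ∀ i : Fin (m + 1), chebU (k i) t / chebU (k i) N ≤ r⁻¹ * (t / N) ^ (k i) := by
    intro i
    have h := factor_le h2t htN.le (k i)
    rw [← hadef, ← hbdef] at h
    have h1 : r⁻¹ = (1 - b ^ 2) / (1 - a ^ 2) := by rw [hrdef, inv_div]
    rw [h1]
    exact h
  have hprod : ∏ i, chebU (k i) t / chebU (k i) N ≤ ∏ i, r⁻¹ * (t / N) ^ (k i) := by
    apply Finset.prod_le_prod
    · intro i _
      exact div_nonneg (cheb_pos h2t _).le (cheb_pos h2N _).le
    · intro i _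
      exact key i
  have heq : ∏ i, r⁻¹ * (t / N) ^ (k i) = r⁻¹ ^ (m + 1) * (t / N) ^ (∑ i, k i) := by
    rw [Finset.prod_mul_distrib, Finset.prod_const, Finset.card_univ, Fintype.card_fin,
      Finset.prod_pow_eq_pow_sum]
  have hrm : r ^ m * (r⁻¹ ^ (m + 1) * (t / N) ^ (∑ i, k i)) = r⁻¹ * (t / N) ^ (∑ i, k i) := by
    rw [pow_succ]
    field_simp
    rw [← mul_pow, mul_one_div_cancel hr0.ne', one_pow]
  have hC : r⁻¹ ≤ (1 - a0 ^ 2)⁻¹ := by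
    have h1 : r⁻¹ = (1 - b ^ 2) / (1 - a ^ 2) := by rw [hrdef, inv_div]
    have h2 : (1 - a0 ^ 2)⁻¹ = 1 / (1 - a0 ^ 2) := inv_eq_one_div _
    rw [h1, h2]
    exact div_le_div₀ (by norm_num) (by nlinarith) hda0 (by nlinarith)
  calc r ^ m * ∏ i, chebU (k i) t / chebU (k i) N
      ≤ r ^ m * (r⁻¹ ^ (m + 1) * (t / N) ^ (∑ i, k i)) := by
        rw [← heq]
        exact mul_le_mul_of_nonneg_left hprod (by positivity)
    _ = r⁻¹ * (t / N) ^ (∑ i, k i) := hrm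
    _ ≤ (1 - a0 ^ 2)⁻¹ * (t / N) ^ (∑ i, k i) :=
        mul_le_mul_of_nonneg_right hC (by positivity)
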